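/- arXiv:1705.04933 — 2 statements merged into one kernel-verified Lean document; each statement's English description precedes it below -/
import Mathlib

section
/- Let E/F be a finite Galois field extension with Galois group Γ, and let W be an E-vector space equipped with a semilinear Γ-action (i.e., σ(e·w) = σ(e)·σ(w)). Then the natural E-linear map E ⊗_F W^Γ → W, e ⊗ w ↦ e·w, is an isomorphism (Galois descent for vector spaces). -/
/-!
Let `(bᵢ)` be an `F`-basis of `E` and `(aᵢ)` its dual basis for the trace form. Writing the trace
as the sum over `Γ` and using Dedekind's independence of characters, the identity
`e = ∑ᵢ Tr(e bᵢ) aᵢ` becomes `∑ᵢ aᵢ σ(bᵢ) = δ_{σ,1}`. Hence the `Γ`-invariant vectors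
`tᵢ(w) = ∑_σ σ(bᵢ) • σ(w)` satisfy `∑ᵢ aᵢ • tᵢ(w) = w`, and `w ↦ ∑ᵢ aᵢ ⊗ tᵢ(w)` is a two-sided
inverse of `e ⊗ w ↦ e • w`.
-/

open scoped TensorProduct

/-- The multiplicative group structure on `A ≃+ A` that the older Mathlib provided
(via `AddAut A`): `g * h = h.trans g`, `1 = refl`, `g⁻¹ = g.symm`. -/
instance addEquivSelfMulGroup (A : Type*) [Add A] : Group (A ≃+ A) where
  mul g h := AddEquiv.trans h g
  one := AddEquiv.refl _
  inv := AddEquiv.symm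
  mul_assoc _ _ _ := rfl
  one_mul _ := rfl
  mul_one _ := rfl
  inv_mul_cancel := AddEquiv.self_trans_symm

section TraceDualBasis

variable {F E : Type*} [Field F] [Field E] [Algebra F E] [FiniteDimensional F E]
  {ι : Type*} [Fintype ι] [DecidableEq ι]

open Classical in
theorem sum_dualBasis_mul_algEquiv_apply [IsGalois F E] (b : Module.Basis ι F E) (σ : E ≃ₐ[F] E) :
    ∑ i, (Algebra.traceForm F E).dualBasis (traceForm_nondegenerate F E) b i * σ (b i) =
      if σ = 1 then 1 else 0 := by
  set a := (Algebra.traceForm F E).dualBasis (traceForm_nondegenerate F E) b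
  have hexpand (e : E) : ∑ τ : E ≃ₐ[F] E, (∑ i, a i * τ (b i)) * τ e = e := by
    conv_rhs => rw [← a.sum_repr e]
    simp only [a, LinearMap.BilinForm.dualBasis_repr_apply, Algebra.traceForm_apply,
      Algebra.smul_def, trace_eq_sum_automorphisms, Finset.sum_mul, map_mul]
    rw [Finset.sum_comm]
    exact Finset.sum_congr rfl fun _ _ => Finset.sum_congr rfl fun _ _ => by ring
  have hli := (linearIndependent_toLinearMap F E E).comp (fun τ : E ≃ₐ[F] E => (τ : E →ₐ[F] E))
    fun _ _ h => AlgEquiv.coe_toAlgHom_injective h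
  refine Fintype.linearIndependent_iffₛ.mp hli (fun τ => ∑ i, a i * τ (b i))
    (fun τ => if τ = 1 then 1 else 0) ?_ σ
  ext e
  simp [hexpand, LinearMap.sum_apply]

theorem sum_dualBasis_tmul_trace_smul [Algebra.IsSeparable F E] {M : Type*} [AddCommGroup M] [Module F M]
    (b : Module.Basis ι F E) (e : E) (m : M) :
    ∑ i, (Algebra.traceForm F E).dualBasis (traceForm_nondegenerate F E) b i ⊗ₜ[F]
      (Algebra.trace F E (b i * e) • m) = e ⊗ₜ[F] m := by
  conv_rhs => rw [← ((Algebra.traceForm F E).dualBasis (traceForm_nondegenerate F E) b).sum_repr e]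
  simp only [TensorProduct.sum_tmul, ← TensorProduct.smul_tmul,
    LinearMap.BilinForm.dualBasis_repr_apply, Algebra.traceForm_apply, mul_comm e]

end TraceDualBasis

section TwistedTrace

variable {F E : Type*} [Field F] [Field E] [Algebra F E]
  {W : Type*} [AddCommGroup W] [Module E W] [Module F W] [IsScalarTower F E W]
  {ρ : (E ≃ₐ[F] E) →* (W ≃+ W)}

theorem map_algebra_smul_of_semilinear (hρ : ∀ σ (e : E) (w : W), ρ σ (e • w) = σ e • ρ σ w)
    (σ : E ≃ₐ[F] E) (f : F) (w : W) : ρ σ (f • w) = f • ρ σ w := by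
  rw [← algebraMap_smul E f w, hρ, AlgEquiv.commutes, algebraMap_smul]

variable [FiniteDimensional F E] (hρ : ∀ σ (e : E) (w : W), ρ σ (e • w) = σ e • ρ σ w)

noncomputable def twistedTrace (c : E) : W →ₗ[F] W where
  toFun w := ∑ σ, σ c • ρ σ w
  map_add' v w := by simp only [map_add, smul_add, Finset.sum_add_distrib]
  map_smul' f w := by
    simp only [map_algebra_smul_of_semilinear hρ, smul_comm (_ : E) f, Finset.smul_sum,
      RingHom.id_apply]

theorem twistedTrace_apply (c : E) (w : W) : twistedTrace hρ c w = ∑ σ, σ c • ρ σ w := rfl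

theorem map_twistedTrace (c : E) (w : W) (τ : E ≃ₐ[F] E) :
    ρ τ (twistedTrace hρ c w) = twistedTrace hρ c w := by
  simp only [twistedTrace_apply, map_sum, hρ]
  exact Fintype.sum_equiv (Equiv.mulLeft τ) _ _ fun σ => by
    rw [Equiv.coe_mulLeft, map_mul ρ, AlgEquiv.mul_apply]
    rfl

variable [IsGalois F E]

theorem twistedTrace_smul_of_forall_map_eq {s : W} (hs : ∀ σ, ρ σ s = s) (c e : E) :
    twistedTrace hρ c (e • s) = Algebra.trace F E (c * e) • s := by
  rw [← algebraMap_smul E (Algebra.trace F E (c * e)) s, trace_eq_sum_automorphisms,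
    Finset.sum_smul, twistedTrace_apply]
  simp only [hρ, hs, map_mul, mul_smul]

theorem sum_dualBasis_smul_twistedTrace {ι : Type*} [Fintype ι] [DecidableEq ι]
    (b : Module.Basis ι F E) (w : W) :
    ∑ i, (Algebra.traceForm F E).dualBasis (traceForm_nondegenerate F E) b i •
      twistedTrace hρ (b i) w = w := by
  classical
  simp only [twistedTrace_apply, Finset.smul_sum, smul_smul]
  rw [Finset.sum_comm]
  simp only [← Finset.sum_smul, sum_dualBasis_mul_algEquiv_apply, ite_smul, one_smul, zero_smul,
    Finset.sum_ite_eq', Finset.mem_univ, if_true, map_one]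
  rfl

end TwistedTrace

/-- Galois descent for vector spaces: let `E/F` be a finite Galois extension with
Galois group `Γ = E ≃ₐ[F] E`, and `W` an `E`-vector space with a semilinear
`Γ`-action `ρ` (`ρ σ (e • w) = σ e • ρ σ w`). If `S` is the `F`-subspace of
`Γ`-fixed points and `L : E ⊗[F] S → W` is the natural map `e ⊗ w ↦ e • w`,
then `L` is an isomorphism. -/
theorem galois_descent_vector_spaces
    (F E : Type*) [Field F] [Field E] [Algebra F E]
    [FiniteDimensional F E] [IsGalois F E]
    (W : Type*) [AddCommGroup W] [Module E W] [Module F W] [IsScalarTower F E W]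
    (ρ : (E ≃ₐ[F] E) →* (W ≃+ W))
    (hρ : ∀ (σ : E ≃ₐ[F] E) (e : E) (w : W), ρ σ (e • w) = σ e • ρ σ w)
    (S : Submodule F W) (hS : ∀ w : W, w ∈ S ↔ ∀ σ : E ≃ₐ[F] E, ρ σ w = w)
    (L : E ⊗[F] S →ₗ[F] W)
    (hL : ∀ (e : E) (w : S), L (e ⊗ₜ[F] w) = e • (w : W)) :
    Function.Bijective L := by
  let b := Module.finBasis F E
  let a := (Algebra.traceForm F E).dualBasis (traceForm_nondegenerate F E) b
  have hfix (c : E) (w : W) : twistedTrace hρ c w ∈ S := (hS _).2 (map_twistedTrace hρ c w)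
  let φ : W →ₗ[F] E ⊗[F] S :=
    ∑ i, TensorProduct.mk F E S (a i) ∘ₗ (twistedTrace hρ (b i)).codRestrict S (hfix (b i))
  have hLφ (w : W) : L (φ w) = w := by
    simpa [φ, hL] using sum_dualBasis_smul_twistedTrace hρ b w
  have hφL : φ ∘ₗ L = LinearMap.id := TensorProduct.ext' fun e s => by
    have hs (c : E) : (twistedTrace hρ c).codRestrict S (hfix c) (e • s) =
        Algebra.trace F E (c * e) • s :=
      Subtype.ext (twistedTrace_smul_of_forall_map_eq hρ ((hS s).1 s.2) c e)
    simp only [φ, LinearMap.comp_apply, hL, LinearMap.sum_apply, hs, TensorProduct.mk_apply,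
      LinearMap.id_apply]
    exact sum_dualBasis_tmul_trace_smul b e s
  exact ⟨Function.LeftInverse.injective (LinearMap.congr_fun hφL),
    Function.RightInverse.surjective hLφ⟩
end

section
/- Let I be a small category, D_• : I → Cat a diagram of categories, and C a category with all I-limits, with a cone of functors F_a : C → D_a over D_•. If each F_a has a right adjoint G_a, then the comparison functor F : C → lim_I D_• has a right adjoint G which, on an object (y_a)_{a∈I} of the limit, is computed as the limit in C of the I-diagram a ↦ G_a(y_a). -/
/-!
A morphism `Φ x ⟶ y` into the strict limit `lim D` is a family of morphisms
`π_a (Φ x) ⟶ y_a` that the transition functors carry into one another. Transposing each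
component along `F_a = Φ ⋙ π_a ⊣ G_a` turns such families into cones from `x` over the diagram
`a ↦ G_a y_a`, whose transition maps are the transposes of the images of the counits; these
cones are the morphisms `x ⟶ lim_a G_a y_a`. The bijection is natural in `x`, so
`y ↦ lim_a G_a y_a` is a right adjoint of `Φ`.
-/

open CategoryTheory CategoryTheory.Limits

universe v u u'

namespace CategoryTheory.Cat

variable {J : Type v} [SmallCategory J] (D : J ⥤ Cat.{v, v})

lemma limit_w_obj {j j' : J} (f : j ⟶ j') (u : (limit D : Cat.{v, v})) :
    (D.map f).toFunctor.obj ((limit.π D j).toFunctor.obj u) = (limit.π D j').toFunctor.obj u :=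
  Functor.congr_obj congr(($(limit.w D f)).toFunctor) u

variable {D}

noncomputable def limitHomMap {j j' : J} (f : j ⟶ j') {u v : (limit D : Cat.{v, v})}
    (g : (limit.π D j).toFunctor.obj u ⟶ (limit.π D j).toFunctor.obj v) :
    (limit.π D j').toFunctor.obj u ⟶ (limit.π D j').toFunctor.obj v :=
  eqToHom (limit_w_obj D f u).symm ≫ (D.map f).toFunctor.map g ≫
    eqToHom (limit_w_obj D f v)

variable {u v w : (limit D : Cat.{v, v})}

@[simp]
lemma limitHomMap_id {j : J}
    (g : (limit.π D j).toFunctor.obj u ⟶ (limit.π D j).toFunctor.obj v) :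
    limitHomMap (𝟙 j) g = g := by
  simp [limitHomMap, Functor.congr_hom congr(($(D.map_id j)).toFunctor) g]

lemma limitHomMap_comp {j j' j'' : J} (f : j ⟶ j') (f' : j' ⟶ j'')
    (g : (limit.π D j).toFunctor.obj u ⟶ (limit.π D j).toFunctor.obj v) :
    limitHomMap (f ≫ f') g = limitHomMap f' (limitHomMap f g) := by
  simp [limitHomMap, Functor.congr_hom congr(($(D.map_comp f f')).toFunctor) g, eqToHom_map]

@[simp]
lemma limitHomMap_comp_hom {j j' : J} (f : j ⟶ j')
    (g : (limit.π D j).toFunctor.obj u ⟶ (limit.π D j).toFunctor.obj v)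
    (g' : (limit.π D j).toFunctor.obj v ⟶ (limit.π D j).toFunctor.obj w) :
    limitHomMap f (g ≫ g') = limitHomMap f g ≫ limitHomMap f g' := by
  simp [limitHomMap]

@[simp]
lemma limitHomMap_π_map {j j' : J} (f : j ⟶ j') (g : u ⟶ v) :
    limitHomMap f ((limit.π D j).toFunctor.map g) = (limit.π D j').toFunctor.map g := by
  simp [limitHomMap, Functor.congr_hom congr(($(limit.w D f)).toFunctor).symm g]

variable (D) in
noncomputable def limitEquivLimitConeX : (limit D : Cat.{v, v}) ≌ HasLimits.limitConeX D :=
  equivOfIso (limit.isoLimitCone ⟨_, HasLimits.limitConeIsLimit D⟩)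

lemma limitEquivLimitConeX_functor_comp_π (j : J) :
    (limitEquivLimitConeX D).functor ⋙ ((HasLimits.limitCone D).π.app j).toFunctor =
      (limit.π D j).toFunctor :=
  congr(($(limit.isoLimitCone_hom_π
    (⟨_, HasLimits.limitConeIsLimit D⟩ : LimitCone D) j)).toFunctor)

variable (D) in
lemma limit_hom_ext {g g' : u ⟶ v}
    (h : ∀ j, (limit.π D j).toFunctor.map g = (limit.π D j).toFunctor.map g') : g = g' := by
  refine (limitEquivLimitConeX D).functor.map_injective
    (Types.limit_ext.{v, v} _ _ _ fun j => ?_)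
  have hg := Functor.congr_hom (limitEquivLimitConeX_functor_comp_π j) g
  have hg' := Functor.congr_hom (limitEquivLimitConeX_functor_comp_π j) g'
  rwa [h j, ← hg'] at hg

lemma exists_limit_hom
    (g : ∀ j, (limit.π D j).toFunctor.obj u ⟶ (limit.π D j).toFunctor.obj v)
    (hg : ∀ ⦃j j'⦄ (f : j ⟶ j'), limitHomMap f (g j) = g j') :
    ∃ m : u ⟶ v, ∀ j, (limit.π D j).toFunctor.map m = g j := by
  let E := limitEquivLimitConeX D
  have hobj (j : J) (x : (limit D : Cat.{v, v})) :
      ((HasLimits.limitCone D).π.app j).toFunctor.obj (E.functor.obj x) =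
        (limit.π D j).toFunctor.obj x :=
    Functor.congr_obj (limitEquivLimitConeX_functor_comp_π j) x
  refine ⟨E.functor.preimage (Types.Limit.mk.{v, v} (HasLimits.homDiagram _ _)
    (fun j => (eqToHom (hobj j u) ≫ g j ≫ eqToHom (hobj j v).symm :
      ((HasLimits.limitCone D).π.app j).toFunctor.obj (E.functor.obj u) ⟶ _))
    fun j j' f => ?_), fun j => ?_⟩
  -- The hom-sets of the explicit model live in `Cat.objects.obj (D.obj j)`, whose category
  -- instance `simp` does not see through; hence the `erw`s.
  · show eqToHom _ ≫ (D.map f).toFunctor.map _ ≫ eqToHom _ = _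
    erw [Functor.map_comp, Functor.map_comp, eqToHom_map, eqToHom_map, Category.assoc,
      Category.assoc, eqToHom_trans_assoc, eqToHom_trans, ← hg f]
    simp only [limitHomMap, Category.assoc, eqToHom_trans, eqToHom_trans_assoc]
    rfl
  · rw [Functor.congr_hom (limitEquivLimitConeX_functor_comp_π j).symm]
    erw [Functor.comp_map, E.functor.map_preimage]
    show _ ≫ limit.π (HasLimits.homDiagram _ _) j _ ≫ _ = _
    erw [Types.Limit.π_mk.{v, v}, Category.assoc, Category.assoc, eqToHom_trans_assoc,
      eqToHom_trans, eqToHom_refl, eqToHom_refl, Category.id_comp, Category.comp_id]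

variable (D) in
noncomputable def limitHomEquiv (u v : (limit D : Cat.{v, v})) :
    (u ⟶ v) ≃ {g : ∀ j, (limit.π D j).toFunctor.obj u ⟶ (limit.π D j).toFunctor.obj v //
      ∀ ⦃j j'⦄ (f : j ⟶ j'), limitHomMap f (g j) = g j'} :=
  Equiv.ofBijective
    (fun m => ⟨fun j => (limit.π D j).toFunctor.map m, fun _ _ f => limitHomMap_π_map f m⟩)
    ⟨fun _ _ h => limit_hom_ext D fun j => congrFun (congrArg Subtype.val h) j,
      fun g => (exists_limit_hom g.1 g.2).imp fun _ hm => Subtype.ext (funext hm)⟩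

@[simp]
lemma limit_π_map_limitHomEquiv_symm (g) (j : J) :
    (limit.π D j).toFunctor.map ((limitHomEquiv D u v).symm g) = g.1 j :=
  congrFun (congrArg Subtype.val ((limitHomEquiv D u v).apply_symm_apply g)) j

end CategoryTheory.Cat

namespace CategoryTheory

variable {I : Type v} [SmallCategory I] {D : I ⥤ Cat.{v, v}} {C : Type u} [Category.{u'} C]
  {Φ : C ⥤ (limit D : Cat.{v, v})} {G : ∀ a, D.obj a ⥤ C}
  (adj : ∀ a, Φ ⋙ (limit.π D a).toFunctor ⊣ G a)

noncomputable def descentDiagramMap (y : (limit D : Cat.{v, v})) {a b : I} (f : a ⟶ b) :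
    (G a).obj ((limit.π D a).toFunctor.obj y) ⟶ (G b).obj ((limit.π D b).toFunctor.obj y) :=
  (adj b).homEquiv _ _ (Cat.limitHomMap (u := Φ.obj ((G a).obj _)) f ((adj a).counit.app _))

lemma homEquiv_comp_descentDiagramMap {x : C} {y : (limit D : Cat.{v, v})} {a b : I} (f : a ⟶ b)
    (g : (limit.π D a).toFunctor.obj (Φ.obj x) ⟶ (limit.π D a).toFunctor.obj y) :
    (adj a).homEquiv _ _ g ≫ descentDiagramMap adj y f =
      (adj b).homEquiv _ _ (Cat.limitHomMap f g) := by
  rw [descentDiagramMap, ← Adjunction.homEquiv_naturality_left]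
  congr 1
  rw [Functor.comp_map, ← Cat.limitHomMap_π_map f, ← Cat.limitHomMap_comp_hom]
  congr 1
  exact ((adj a).homEquiv_counit _ _ _).symm.trans (Equiv.symm_apply_apply _ g)

-- Reducible, so that `(descentDiagram adj y).obj a` unifies with `(G a).obj _` in the
-- cone and hom-equivalence below.
noncomputable abbrev descentDiagram (y : (limit D : Cat.{v, v})) : I ⥤ C where
  obj a := (G a).obj ((limit.π D a).toFunctor.obj y)
  map f := descentDiagramMap adj y f
  map_id a := by
    rw [descentDiagramMap, Cat.limitHomMap_id, ← Adjunction.homEquiv_symm_id,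
      Equiv.apply_symm_apply]
  map_comp f g := by
    rw [descentDiagramMap, Cat.limitHomMap_comp, ← homEquiv_comp_descentDiagramMap]
    rfl

variable [HasLimitsOfShape I C]

noncomputable def descentCone {x : C} {y : (limit D : Cat.{v, v})} (m : Φ.obj x ⟶ y) :
    Cone (descentDiagram adj y) where
  pt := x
  π.app a := (adj a).homEquiv _ _ ((limit.π D a).toFunctor.map m)
  π.naturality a b f := by
    simp only [Functor.const_obj_obj, Functor.const_obj_map, Category.id_comp,
      homEquiv_comp_descentDiagramMap, Cat.limitHomMap_π_map]

noncomputable def descentHomEquiv (x : C) (y : (limit D : Cat.{v, v})) :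
    (Φ.obj x ⟶ y) ≃ (x ⟶ limit (descentDiagram adj y)) where
  toFun m := limit.lift _ (descentCone adj m)
  invFun h := (Cat.limitHomEquiv D _ _).symm
    ⟨fun a => ((adj a).homEquiv _ _).symm (h ≫ limit.π _ a), fun a b f => by
      apply ((adj b).homEquiv _ _).injective
      rw [← homEquiv_comp_descentDiagramMap, Equiv.apply_symm_apply, Equiv.apply_symm_apply]
      exact (Category.assoc _ _ _).trans (congrArg (h ≫ ·) (limit.w _ f))⟩
  left_inv m := Cat.limit_hom_ext D fun a => by
    rw [Cat.limit_π_map_limitHomEquiv_symm]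
    exact ((adj a).homEquiv _ _).symm_apply_eq.2 (limit.lift_π _ _)
  right_inv h := limit.hom_ext fun a => by
    refine (limit.lift_π _ _).trans ?_
    simp only [descentCone, Functor.const_obj_obj, Cat.limit_π_map_limitHomEquiv_symm,
      Equiv.apply_symm_apply]

lemma descentHomEquiv_comp_π {x : C} {y : (limit D : Cat.{v, v})} (m : Φ.obj x ⟶ y) (a : I) :
    descentHomEquiv adj x y m ≫ limit.π _ a =
      (adj a).homEquiv _ _ ((limit.π D a).toFunctor.map m) :=
  limit.lift_π _ _

lemma descentHomEquiv_naturality {x' x : C} {y : (limit D : Cat.{v, v})} (s : x' ⟶ x)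
    (m : Φ.obj x ⟶ y) :
    descentHomEquiv adj x' y (Φ.map s ≫ m) = s ≫ descentHomEquiv adj x y m :=
  limit.hom_ext fun a => by
    rw [Category.assoc, descentHomEquiv_comp_π, descentHomEquiv_comp_π, Functor.map_comp,
      ← Adjunction.homEquiv_naturality_left]
    rfl

end CategoryTheory

theorem adjoint_descent_general
    {I : Type v} [SmallCategory I] (D : I ⥤ Cat.{v, v})
    {C : Type u} [Category.{u'} C] [HasLimitsOfShape I C]
    (F : ∀ a : I, C ⥤ D.obj a)
    (G : ∀ a : I, D.obj a ⥤ C)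
    (adj : ∀ a : I, F a ⊣ G a)
    (Φ : C ⥤ (limit D : Cat.{v, v}))
    (hΦ : ∀ a : I, Φ ⋙ ((limit.π D a).toFunctor : (limit D : Cat.{v, v}) ⥤ D.obj a) = F a) :
    ∃ Gbar : (limit D : Cat.{v, v}) ⥤ C,
      Nonempty (Φ ⊣ Gbar) ∧
      ∀ y : (limit D : Cat.{v, v}), ∃ d : I ⥤ C,
        (∀ a : I, d.obj a = (G a).obj ((limit.π D a).toFunctor.obj y)) ∧
        ∃ c : Cone d, c.pt = Gbar.obj y ∧ Nonempty (IsLimit c) := by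
  obtain rfl : F = fun a => Φ ⋙ (limit.π D a).toFunctor := funext fun a => (hΦ a).symm
  exact ⟨_, ⟨Adjunction.adjunctionOfEquivRight _ fun _ _ _ => descentHomEquiv_naturality adj⟩,
    fun y => ⟨descentDiagram adj y, fun _ => rfl, limit.cone _, rfl, ⟨limit.isLimit _⟩⟩⟩

/-- Adjoint descent: given a cone of functors `F_a : C ⥤ D_a` over a diagram
`D : I ⥤ Cat`, if each `F_a` has a right adjoint `G_a` and `C` has `I`-limits,
then the comparison functor `Φ : C ⥤ lim D` has a right adjoint `Ḡ` which, on an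
object `y = (y_a)` of the limit, is computed as the limit in `C` of an `I`-diagram
whose value at `a` is `G_a (y_a)`. -/
theorem adjoint_descent
    {I : Type v} [SmallCategory I] (D : I ⥤ Cat.{v, v})
    {C : Type u} [Category.{u'} C] [HasLimitsOfShape I C]
    (F : ∀ a : I, C ⥤ D.obj a)
    (hF : ∀ (a b : I) (f : a ⟶ b), F a ⋙ (D.map f).toFunctor = F b)
    (G : ∀ a : I, D.obj a ⥤ C)
    (adj : ∀ a : I, F a ⊣ G a)
    (Φ : C ⥤ (limit D : Cat.{v, v}))
    (hΦ : ∀ a : I, Φ ⋙ ((limit.π D a).toFunctor : (limit D : Cat.{v, v}) ⥤ D.obj a) = F a) :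
    ∃ Gbar : (limit D : Cat.{v, v}) ⥤ C,
      Nonempty (Φ ⊣ Gbar) ∧
      ∀ y : (limit D : Cat.{v, v}), ∃ d : I ⥤ C,
        (∀ a : I, d.obj a = (G a).obj ((limit.π D a).toFunctor.obj y)) ∧
        ∃ c : Cone d, c.pt = Gbar.obj y ∧ Nonempty (IsLimit c) :=
  adjoint_descent_general D F G adj Φ hΦ
end
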